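/- arXiv:2212.11247 — 4 statements merged into one kernel-verified Lean document; each statement's English description precedes it below -/
import Mathlib

section
/- Let H be a finite group, p a prime not dividing |H|, and k a positive integer. Let M be a nonzero finite module over the group ring (ℤ/p^kℤ)[H]. If M is indecomposable, i.e., whenever M₁ and M₂ are complementary submodules of M (M₁ ⊓ M₂ = 0 and M₁ + M₂ = M) one of M₁, M₂ is zero, then M is generated as a (ℤ/p^kℤ)[H]-module by a single element: there exists m ∈ M whose submodule span is all of M. -/
/-- In a finite monoid, some positive power of every element is idempotent. -/
lemma thevenaz_aux_pow_idem {S : Type*} [Monoid S] [Finite S] (a : S) :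
    ∃ n : ℕ, 0 < n ∧ a ^ n * a ^ n = a ^ n := by
  obtain ⟨i, j, hne, hij⟩ := Finite.exists_ne_map_eq_of_infinite (fun n : ℕ => a ^ n)
  wlog h : i < j generalizing i j
  · exact this j i hne.symm hij.symm (by omega)
  set d := j - i with hd
  have hd0 : 0 < d := by omega
  have step : ∀ m : ℕ, a ^ (i + m + d) = a ^ (i + m) := by
    intro m
    have h1 : i + m + d = m + j := by omega
    have h2 : m + i = i + m := by omega
    rw [h1, pow_add, ← hij, ← pow_add, h2]
  have key : ∀ t m : ℕ, a ^ (i + m + t * d) = a ^ (i + m) := by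
    intro t
    induction t with
    | zero => simp
    | succ t ih =>
        intro m
        have h3 : i + m + (t + 1) * d = i + (m + t * d) + d := by ring
        have h4 : i + (m + t * d) = i + m + t * d := by ring
        rw [h3, step, h4, ih]
  set n := (i + 1) * d with hn
  have hni : i + 1 ≤ n := Nat.le_mul_of_pos_right _ hd0
  refine ⟨n, by omega, ?_⟩
  rw [← pow_add]
  have h5 : n + n = i + (n - i) + (i + 1) * d := by omega
  have h6 : i + (n - i) = n := by omega
  rw [h5, key, h6]

/-- In a finite nontrivial ring with only trivial idempotents, whenever a finite sum
equals `1`, one of the summands is a unit. -/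
lemma thevenaz_aux_unit_of_sum {E : Type*} [Ring E] [Finite E]
    (h1 : (1 : E) ≠ 0)
    (hidem : ∀ e : E, e * e = e → e = 0 ∨ e = 1)
    {ι : Type*} (s : Finset ι) (f : ι → E) (hs : ∑ j ∈ s, f j = 1) :
    ∃ j ∈ s, IsUnit (f j) := by
  classical
  induction s using Finset.induction_on generalizing f with
  | empty => simp at hs; exact absurd hs.symm h1
  | @insert a s' ha ih =>
      rw [Finset.sum_insert ha] at hs
      by_cases hu : IsUnit (f a)
      · exact ⟨a, Finset.mem_insert_self _ _, hu⟩
      · obtain ⟨n, hn, hidm⟩ := thevenaz_aux_pow_idem (f a)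
        have hzero : f a ^ n = 0 := by
          rcases hidem _ hidm with h0 | hone
          · exact h0
          · exfalso
            apply hu
            refine ⟨⟨f a, f a ^ (n - 1), ?_, ?_⟩, rfl⟩
            · rw [← pow_succ']
              rw [show n - 1 + 1 = n by omega, hone]
            · rw [← pow_succ]
              rw [show n - 1 + 1 = n by omega, hone]
        have hunit : IsUnit (1 - f a) := by
          refine ⟨⟨1 - f a, ∑ i ∈ Finset.range n, f a ^ i, ?_, ?_⟩, rfl⟩
          · have h9 := mul_geom_sum (f a) n
            rw [hzero] at h9
            rw [← neg_sub (f a) 1, neg_mul, h9]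
            abel
          · have h9 := geom_sum_mul (f a) n
            rw [hzero] at h9
            rw [← neg_sub (f a) 1, mul_neg, h9]
            abel
        obtain ⟨u, hu'⟩ := hunit
        have hsum : ∑ j ∈ s', (↑u⁻¹ * f j) = 1 := by
          rw [← Finset.mul_sum]
          have h7 : ∑ j ∈ s', f j = 1 - f a := by
            rw [← hs]; abel
          rw [h7, ← hu', Units.inv_mul]
        obtain ⟨j, hj, hju⟩ := ih _ hsum
        refine ⟨j, Finset.mem_insert_of_mem hj, ?_⟩
        have h8 : f j = ↑u * (↑u⁻¹ * f j) := by
          rw [← mul_assoc, Units.mul_inv, one_mul]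
        rw [h8]
        exact u.isUnit.mul hju

/-- A finite abelian group decomposes via projections with cyclic images. -/
lemma thevenaz_aux_decomp (M : Type*) [AddCommGroup M] [Finite M] :
    ∃ (ι : Type) (_ : Fintype ι) (c : ι → M) (π : ι → (M →+ M)),
      (∀ x, ∑ i, π i x = x) ∧ ∀ i x, ∃ n : ℤ, π i x = n • c i := by
  classical
  obtain ⟨ι, hι, n, hn, ⟨e⟩⟩ := AddCommGroup.equiv_directSum_zmod_of_finite' M
  refine ⟨ι, hι, fun i => e.symm (DirectSum.of (fun i => ZMod (n i)) i 1),
    fun i => AddMonoidHom.mk'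
      (fun x => e.symm (DirectSum.of (fun i => ZMod (n i)) i (e x i))) ?_, ?_, ?_⟩
  · intro x y
    dsimp only
    rw [map_add, DirectSum.add_apply, map_add, map_add]
  · intro x
    simp only [AddMonoidHom.mk'_apply]
    rw [← map_sum, DirectSum.sum_univ_of, AddEquiv.symm_apply_apply]
  · intro i x
    haveI : NeZero (n i) := ⟨by have := hn i; omega⟩
    refine ⟨((e x i).val : ℤ), ?_⟩
    simp only [AddMonoidHom.mk'_apply]
    have h1 : e x i = (e x i).val • (1 : ZMod (n i)) := by
      rw [nsmul_eq_mul, mul_one, ZMod.natCast_val, ZMod.cast_id]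
    conv_lhs => rw [h1]
    rw [map_nsmul, map_nsmul, natCast_zsmul]

/-- **Thévenaz's Lemma.** Let `H` be a finite group, `p` a prime not dividing
`|H|`, and `k ≥ 1`. Any nonzero finite indecomposable module over the group ring
`(ℤ/p^kℤ)[H]` is generated by a single element. -/
theorem thevenaz_indecomposable_cyclic {p : ℕ} (hp : p.Prime) {k : ℕ} (hk : 0 < k)
    {H : Type*} [Group H] [Finite H] (hpH : ¬ p ∣ Nat.card H)
    (M : Type*) [AddCommGroup M] [Module (MonoidAlgebra (ZMod (p ^ k)) H) M]
    [Finite M] [Nontrivial M]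
    (hindec : ∀ M₁ M₂ : Submodule (MonoidAlgebra (ZMod (p ^ k)) H) M,
      M₁ ⊓ M₂ = ⊥ → M₁ ⊔ M₂ = ⊤ → M₁ = ⊥ ∨ M₂ = ⊥) :
    ∃ m : M, Submodule.span (MonoidAlgebra (ZMod (p ^ k)) H) ({m} : Set M) = ⊤ := by
  classical
  cases nonempty_fintype H
  set Λ := ZMod (p ^ k) with hΛ
  set R := MonoidAlgebra Λ H with hRdef
  haveI : NeZero (p ^ k) := ⟨pow_ne_zero k hp.ne_zero⟩
  -- `|H|` is a unit in `Λ`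
  have hcop : (Nat.card H).Coprime (p ^ k) :=
    (((Nat.Prime.coprime_iff_not_dvd hp).mpr hpH).symm).pow_right k
  have hunit : IsUnit ((Nat.card H : Λ)) := (ZMod.isUnit_iff_coprime _ _).mpr hcop
  obtain ⟨u, hu⟩ := hunit
  set v : R := algebraMap Λ R ↑u⁻¹ with hv
  -- decompose `M` additively into cyclic pieces
  obtain ⟨ι, hι, c, π, hsum, hcyc⟩ := thevenaz_aux_decomp M
  set ofH : H →* R := MonoidAlgebra.of Λ H with hofH
  have key : ∀ (a b : H) (y : M), ofH a • ofH b • y = ofH (a * b) • y := by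
    intro a b y; rw [← mul_smul, ← map_mul]
  -- the averaged projections
  set τ : ι → M → M := fun i x => v • ∑ h : H, ofH h • π i (ofH h⁻¹ • x) with hτ
  have τdef : ∀ i x, τ i x = v • ∑ h : H, ofH h • π i (ofH h⁻¹ • x) := fun _ _ => rfl
  have τadd : ∀ i (x y : M), τ i (x + y) = τ i x + τ i y := by
    intro i x y
    simp only [τdef, smul_add, map_add, Finset.sum_add_distrib]
  have τnat : ∀ i (m : ℕ) (x : M), τ i (m • x) = m • τ i x := by
    intro i m x
    exact (AddMonoidHom.mk' (τ i) (τadd i)).map_nsmul m x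
  have τalg : ∀ i (a : Λ) (x : M), τ i (algebraMap Λ R a • x) = algebraMap Λ R a • τ i x := by
    intro i a x
    obtain ⟨m, rfl⟩ := ZMod.natCast_zmod_surjective a
    rw [map_natCast, Nat.cast_smul_eq_nsmul, τnat, Nat.cast_smul_eq_nsmul]
  have τH : ∀ i (g : H) (x : M), τ i (ofH g • x) = ofH g • τ i x := by
    intro i g x
    rw [τdef, τdef]
    have h1 : ∑ h : H, ofH h • π i (ofH h⁻¹ • ofH g • x)
        = ofH g • ∑ h : H, ofH h • π i (ofH h⁻¹ • x) := by
      rw [Finset.smul_sum]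
      refine Fintype.sum_equiv (Equiv.mulLeft g⁻¹) _ _ ?_
      intro h
      simp only [Equiv.coe_mulLeft, key, mul_inv_rev, inv_inv, mul_inv_cancel_left]
    rw [h1, smul_smul, smul_smul]
    congr 1
    exact Algebra.commutes (↑u⁻¹ : Λ) (ofH g)
  have τlin : ∀ i (r : R) (x : M), τ i (r • x) = r • τ i x := by
    intro i r
    refine MonoidAlgebra.induction_on
      (motive := fun f => ∀ x : M, τ i (f • x) = f • τ i x) r (fun g x => τH i g x)
      (fun f g hf hg x => ?_) (fun a f hf x => ?_)
    · rw [add_smul, τadd, hf, hg, add_smul]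
    · rw [Algebra.smul_def, mul_smul, τalg, hf, mul_smul]
  set σ : ι → Module.End R M := fun i =>
    { toFun := τ i, map_add' := τadd i, map_smul' := fun r x => τlin i r x } with hσ
  have σapp : ∀ i x, σ i x = τ i x := fun _ _ => rfl
  -- the sum of the averaged projections is the identity
  have hone : ∀ x : M, ∑ i : ι, τ i x = x := by
    intro x
    simp only [τdef]
    rw [← Finset.smul_sum, Finset.sum_comm]
    have h2 : ∀ h : H, ∑ i : ι, ofH h • π i (ofH h⁻¹ • x) = x := by
      intro h
      rw [← Finset.smul_sum, hsum, key, mul_inv_cancel, map_one, one_smul]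
    rw [Finset.sum_congr rfl (fun h _ => h2 h), Finset.sum_const, Finset.card_univ]
    rw [← Nat.cast_smul_eq_nsmul R, ← map_natCast (algebraMap Λ R), hv, smul_smul, ← map_mul]
    rw [← Nat.card_eq_fintype_card, ← hu, Units.inv_mul, map_one, one_smul]
  -- each averaged projection has image inside the cyclic module generated by `c i`
  have hrange : ∀ i (x : M), τ i x ∈ Submodule.span R {c i} := by
    intro i x
    rw [τdef]
    refine Submodule.smul_mem _ _ (Submodule.sum_mem _ fun h _ => ?_)
    obtain ⟨m, hm⟩ := hcyc i (ofH h⁻¹ • x)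
    rw [hm, smul_comm]
    exact (Submodule.span R {c i}).toAddSubgroup.zsmul_mem
      (Submodule.smul_mem _ _ (Submodule.mem_span_singleton_self _)) m
  -- the endomorphism ring is finite with only trivial idempotents
  haveI : Finite (Module.End R M) :=
    Finite.of_injective (fun f : Module.End R M => (f : M → M)) DFunLike.coe_injective
  have h1 : (1 : Module.End R M) ≠ 0 := by
    obtain ⟨x, hx⟩ := exists_ne (0 : M)
    intro h
    have := DFunLike.congr_fun h x
    rw [Module.End.one_apply, LinearMap.zero_apply] at this
    exact hx this
  have hidem : ∀ e : Module.End R M, e * e = e → e = 0 ∨ e = 1 := by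
    intro e he
    have hinf : LinearMap.range e ⊓ LinearMap.ker e = ⊥ := by
      rw [eq_bot_iff]
      rintro x ⟨hx1, hx2⟩
      obtain ⟨y, hy⟩ := hx1
      have hex : e x = x := by rw [← hy, ← Module.End.mul_apply, he]
      have hx0 : x = 0 := by rw [← hex]; exact hx2
      simp [hx0]
    have hsup : LinearMap.range e ⊔ LinearMap.ker e = ⊤ := by
      rw [eq_top_iff]
      intro x _
      have hm1 : e x ∈ LinearMap.range e := LinearMap.mem_range_self e x
      have hm2 : x - e x ∈ LinearMap.ker e := by
        rw [LinearMap.mem_ker, map_sub, ← Module.End.mul_apply, he, sub_self]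
      have hmem := Submodule.add_mem_sup hm1 hm2
      have hxx : e x + (x - e x) = x := by abel
      rwa [hxx] at hmem
    rcases hindec _ _ hinf hsup with h | h
    · left; exact LinearMap.range_eq_bot.mp h
    · right
      apply LinearMap.ext
      intro x
      have hm : e x - x ∈ LinearMap.ker e := by
        rw [LinearMap.mem_ker, map_sub, ← Module.End.mul_apply, he, sub_self]
      rw [h, Submodule.mem_bot] at hm
      rw [Module.End.one_apply]
      exact sub_eq_zero.mp hm
  -- the sum of the `σ i` is `1`, so one of them is a unit
  have hS : ∑ i ∈ Finset.univ, σ i = (1 : Module.End R M) := by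
    apply LinearMap.ext
    intro x
    rw [LinearMap.sum_apply, Module.End.one_apply]
    exact hone x
  obtain ⟨j, _, hjU⟩ := thevenaz_aux_unit_of_sum h1 hidem Finset.univ σ hS
  obtain ⟨w, hw⟩ := hjU
  refine ⟨c j, ?_⟩
  rw [eq_top_iff]
  intro x _
  have h5 : ((↑w : Module.End R M) * ↑w⁻¹) x = x := by rw [Units.mul_inv, Module.End.one_apply]
  rw [Module.End.mul_apply, hw] at h5
  rw [← h5]
  exact hrange j _
end

section
/- Let G be a finite semisimple group, i.e., a finite group in which every abelian normal subgroup is trivial, and let Soc(G) denote its socle. Let S ≤ G be a subgroup that is a nonabelian simple group, and let N be the normal closure of S in G. Then S is an internal direct factor of Soc(G) (i.e., there exists a subgroup T such that S and T are both normal in Soc(G), S ⊓ T is trivial, and S and T together generate Soc(G)) if and only if N is isomorphic to S^k for some k ≥ 1 and S is normal in N. -/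
/-- A normal subgroup `M` of `G` is minimal normal if it is nontrivial and the
only normal subgroups of `G` contained in it are `⊥` and `M` itself. -/
def Subgroup.IsMinimalNormal {G : Type*} [Group G] (M : Subgroup G) : Prop :=
  M.Normal ∧ M ≠ ⊥ ∧ ∀ K : Subgroup G, K.Normal → K ≤ M → K = ⊥ ∨ K = M

/-- The socle of a group: the join of all minimal normal subgroups. -/
def Subgroup.socle (G : Type*) [Group G] : Subgroup G :=
  sSup {M : Subgroup G | M.IsMinimalNormal}

open Subgroup

/-- The subgroup of `Fin k → S` of functions supported at `i`. -/
private def piFactor {S : Type*} [Group S] {k : ℕ} (i : Fin k) : Subgroup (Fin k → S) where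
  carrier := {x | ∀ j, j ≠ i → x j = 1}
  one_mem' := fun _ _ => rfl
  mul_mem' := by
    intro a b ha hb j hj
    rw [Pi.mul_apply, ha j hj, hb j hj, one_mul]
  inv_mem' := by
    intro a ha j hj
    rw [Pi.inv_apply, ha j hj, inv_one]

private lemma mem_piFactor_iff {S : Type*} [Group S] {k : ℕ} (i : Fin k) (x : Fin k → S) :
    x ∈ piFactor i ↔ ∀ j, j ≠ i → x j = 1 := Iff.rfl

private lemma center_eq_bot_of_noncomm {H : Type*} [Group H] [IsSimpleGroup H]
    (h : ∃ x y : H, x * y ≠ y * x) : Subgroup.center H = ⊥ := by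
  rcases (Subgroup.center H).normal_of_characteristic.eq_bot_or_eq_top with h1 | h1
  · exact h1
  · exfalso
    obtain ⟨x, y, hxy⟩ := h
    apply hxy
    have hy : y ∈ Subgroup.center H := by rw [h1]; trivial
    exact (Subgroup.mem_center_iff.mp hy x)

/-- every element of the pi group lies in the join of the factors -/
private lemma mem_iSup_piFactor {S : Type*} [Group S] {k : ℕ} (x : Fin k → S) :
    x ∈ ⨆ i, (piFactor i : Subgroup (Fin k → S)) := by
  classical
  suffices h : ∀ (s : Finset (Fin k)) (y : Fin k → S), (∀ j, j ∉ s → y j = 1) →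
      y ∈ ⨆ i, (piFactor i : Subgroup (Fin k → S)) by
    exact h Finset.univ x (fun j hj => absurd (Finset.mem_univ j) hj)
  intro s
  induction s using Finset.induction_on with
  | empty =>
    intro y hy
    have : y = 1 := funext fun j => hy j (Finset.notMem_empty j)
    rw [this]; exact one_mem _
  | insert _ _ ha ih =>
    rename_i a s
    intro y hy
    have hdecomp : y = Pi.mulSingle a (y a) * Function.update y a 1 := by
      funext j
      by_cases hj : j = a
      · subst hj
        rw [Pi.mul_apply, Pi.mulSingle_eq_same, Function.update_self, mul_one]
      · rw [Pi.mul_apply, Pi.mulSingle_eq_of_ne hj, Function.update_of_ne hj, one_mul]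
    rw [hdecomp]
    refine mul_mem ?_ (ih (Function.update y a 1) ?_)
    · refine le_iSup (fun i => (piFactor i : Subgroup (Fin k → S))) a ?_
      intro j hj
      exact Pi.mulSingle_eq_of_ne hj _
    · intro j hj
      by_cases hja : j = a
      · subst hja; exact Function.update_self _ _ _
      · rw [Function.update_of_ne hja]
        exact hy j (by simp [hja, hj])

/-- In a direct power of a nonabelian simple group, any normal subgroup together with its
centralizer generates everything. -/
private lemma sup_centralizer_eq_top_pi {S : Type*} [Group S] [IsSimpleGroup S]
    (hnc : ∃ x y : S, x * y ≠ y * x) {k : ℕ} (W : Subgroup (Fin k → S)) (hW : W.Normal) :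
    W ⊔ Subgroup.centralizer (W : Set (Fin k → S)) = ⊤ := by
  classical
  have key : ∀ i : Fin k, (piFactor i : Subgroup (Fin k → S)) ≤
      W ⊔ Subgroup.centralizer (W : Set (Fin k → S)) := by
    intro i
    by_cases hw : ∀ w ∈ W, w i = 1
    · -- the factor centralizes W
      refine le_trans ?_ le_sup_right
      intro x hx
      rw [Subgroup.mem_centralizer_iff]
      intro h hh
      funext j
      by_cases hj : j = i
      · subst hj
        rw [Pi.mul_apply, Pi.mul_apply, hw h hh, one_mul, mul_one]
      · rw [Pi.mul_apply, Pi.mul_apply, hx j hj, one_mul, mul_one]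
    · -- the factor is contained in W
      refine le_trans ?_ le_sup_left
      push_neg at hw
      obtain ⟨w, hwW, hwi⟩ := hw
      -- w i is not central
      have hcent := center_eq_bot_of_noncomm hnc
      have hnc' : ∃ s : S, w i * s ≠ s * w i := by
        by_contra hall
        push_neg at hall
        have : w i ∈ Subgroup.center S := Subgroup.mem_center_iff.mpr fun g => (hall g).symm
        rw [hcent, Subgroup.mem_bot] at this
        exact hwi this
      obtain ⟨s, hs⟩ := hnc'
      set u : Fin k → S := Pi.mulSingle i s with hu
      set c : Fin k → S := w * (u * w⁻¹ * u⁻¹) with hcdef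
      have hcW : c ∈ W := mul_mem hwW (by
        have := hW.conj_mem w⁻¹ (inv_mem hwW) u
        simpa [mul_assoc] using this)
      have hcΓ : c ∈ piFactor i := by
        intro j hj
        have huj : u j = 1 := Pi.mulSingle_eq_of_ne hj _
        simp [hcdef, Pi.mul_apply, Pi.inv_apply, huj]
      have hci : c i ≠ 1 := by
        have hui : u i = s := by rw [hu]; simp
        simp only [hcdef, Pi.mul_apply, Pi.inv_apply, hui]
        intro heq
        apply hs
        have h1 : w i * s * (w i)⁻¹ * s⁻¹ = 1 := by
          simpa [mul_assoc] using heq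
        have h2 : w i * s * (w i)⁻¹ = s := by
          have := mul_inv_eq_one.mp h1
          exact this
        calc w i * s = (w i * s * (w i)⁻¹) * w i := by group
          _ = s * w i := by rw [h2]
      -- the image of W ⊓ piFactor i in S is a nontrivial normal subgroup
      set π : (Fin k → S) →* S := Pi.evalMonoidHom (fun _ => S) i with hπ
      set K : Subgroup S := (W ⊓ piFactor i).map π with hK
      have hKnormal : K.Normal := by
        constructor
        rintro n ⟨x, ⟨hxW, hxΓ⟩, rfl⟩ g
        refine ⟨(Pi.mulSingle i g : Fin k → S) * x * (Pi.mulSingle i g : Fin k → S)⁻¹, ⟨?_, ?_⟩, ?_⟩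
        · have := hW.conj_mem x hxW ((Pi.mulSingle i g : Fin k → S))
          simpa [mul_assoc] using this
        · intro j hj
          have : (Pi.mulSingle i g : Fin k → S) j = 1 := Pi.mulSingle_eq_of_ne hj _
          simp [Pi.mul_apply, Pi.inv_apply, this, hxΓ j hj]
        · simp [hπ, Pi.evalMonoidHom, Pi.mul_apply, Pi.inv_apply, Pi.mulSingle_eq_same]
      have hKne : K ≠ ⊥ := by
        intro hbot
        apply hci
        have : c i ∈ K := ⟨c, ⟨hcW, hcΓ⟩, rfl⟩
        rw [hbot, Subgroup.mem_bot] at this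
        exact this
      have hKtop : K = ⊤ := (hKnormal.eq_bot_or_eq_top).resolve_left hKne
      -- conclude piFactor i ≤ W
      intro x hx
      have hxK : x i ∈ K := by rw [hKtop]; trivial
      obtain ⟨y, ⟨hyW, hyΓ⟩, hyi⟩ := hxK
      have hxy : y = x := by
        funext j
        by_cases hj : j = i
        · subst hj; exact hyi
        · rw [hyΓ j hj, hx j hj]
      rw [← hxy]; exact hyW
  rw [eq_top_iff]
  intro x _
  exact (iSup_le key) (mem_iSup_piFactor x)

/-- Transfer of the previous lemma along an isomorphism. -/
private lemma sup_centralizer_eq_top_of_equiv {H : Type*} [Group H] {S : Type*} [Group S]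
    [IsSimpleGroup S] (hnc : ∃ x y : S, x * y ≠ y * x) {k : ℕ} (e : H ≃* (Fin k → S))
    (W : Subgroup H) (hW : W.Normal) :
    W ⊔ Subgroup.centralizer (W : Set H) = ⊤ := by
  have hmap : (W.map e.toMonoidHom).Normal := hW.map e.toMonoidHom e.surjective
  have h4 := sup_centralizer_eq_top_pi hnc (W.map e.toMonoidHom) hmap
  have hc : (Subgroup.centralizer (W : Set H)).map e.toMonoidHom =
      Subgroup.centralizer ((W.map e.toMonoidHom : Subgroup (Fin k → S)) : Set (Fin k → S)) := by
    ext y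
    constructor
    · rintro ⟨x, hx, rfl⟩
      rw [Subgroup.mem_centralizer_iff]
      rintro z ⟨w, hw, rfl⟩
      have := Subgroup.mem_centralizer_iff.mp hx w hw
      simp only [MulEquiv.coe_toMonoidHom]
      rw [← map_mul, ← map_mul, this]
    · intro hy
      refine ⟨e.symm y, ?_, by simp⟩
      rw [SetLike.mem_coe, Subgroup.mem_centralizer_iff]
      intro w hw
      have hew : (e w : Fin k → S) ∈ (W.map e.toMonoidHom : Set (Fin k → S)) :=
        ⟨w, hw, rfl⟩
      have := Subgroup.mem_centralizer_iff.mp hy (e w) hew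
      apply e.injective
      rw [map_mul, map_mul, MulEquiv.apply_symm_apply, this]
  have hfinal : (W ⊔ Subgroup.centralizer (W : Set H)).map e.toMonoidHom = ⊤ := by
    rw [Subgroup.map_sup, hc, h4]
  have := congrArg (Subgroup.comap e.toMonoidHom) hfinal
  rwa [Subgroup.comap_map_eq_self_of_injective e.injective, Subgroup.comap_top] at this

private lemma exists_minimal_normal_le {G : Type*} [Group G] [Finite G] (K : Subgroup G)
    (hK : K.Normal) (hKbot : K ≠ ⊥) :
    ∃ M : Subgroup G, M.IsMinimalNormal ∧ M ≤ K := by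
  have hfin : Finite (Subgroup G) := Finite.of_injective _ SetLike.coe_injective
  set T : Set (Subgroup G) := {L | L.Normal ∧ L ≠ ⊥ ∧ L ≤ K} with hT
  have hTfin : T.Finite := Set.toFinite T
  have hTne : T.Nonempty := ⟨K, hK, hKbot, le_rfl⟩
  obtain ⟨M, hMmin⟩ := hTfin.exists_minimal hTne
  obtain ⟨hM, hmin⟩ : M ∈ T ∧ ∀ L ∈ T, L ≤ M → M = L :=
    ⟨hMmin.1, fun L hL hLM => (hMmin.eq_of_le hL hLM).symm⟩
  refine ⟨M, ⟨hM.1, hM.2.1, ?_⟩, hM.2.2⟩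
  intro L hL hLM
  by_cases hLbot : L = ⊥
  · exact Or.inl hLbot
  · right
    have hLT : L ∈ T := ⟨hL, hLbot, hLM.trans hM.2.2⟩
    exact ((hmin L hLT hLM)).symm

private lemma socle_normal (G : Type*) [Group G] : (Subgroup.socle G).Normal := by
  have hconj : ∀ (g : G) (M : Subgroup G), M.Normal →
      M.map (MulAut.conj g).toMonoidHom = M := by
    intro g M hM
    ext x
    constructor
    · rintro ⟨m, hm, rfl⟩
      simpa [MulAut.conj_apply] using hM.conj_mem m hm g
    · intro hx
      refine ⟨g⁻¹ * x * g, ?_, by simp [MulAut.conj_apply]; group⟩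
      simpa [mul_assoc] using hM.conj_mem x hx g⁻¹
  constructor
  intro n hn g
  have hsoc : Subgroup.socle G = ⨆ M : {M : Subgroup G // M.IsMinimalNormal}, (M : Subgroup G) :=
    sSup_eq_iSup' _
  have hmap : (Subgroup.socle G).map (MulAut.conj g).toMonoidHom = Subgroup.socle G := by
    rw [hsoc, Subgroup.map_iSup]
    congr 1
    funext M
    exact hconj g M M.2.1
  have : (MulAut.conj g).toMonoidHom n ∈
      (Subgroup.socle G).map (MulAut.conj g).toMonoidHom :=
    Subgroup.mem_map_of_mem _ hn
  rw [hmap] at this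
  simpa [MulAut.conj_apply] using this

private lemma conj_mem_centralizer_of {G : Type*} [Group G] {X : Subgroup G} {n g : G}
    (hg : ∀ x ∈ X, g⁻¹ * x * g ∈ X) (hn : n ∈ Subgroup.centralizer (X : Set G)) :
    g * n * g⁻¹ ∈ Subgroup.centralizer (X : Set G) := by
  rw [Subgroup.mem_centralizer_iff] at hn ⊢
  intro x hx
  have hx' : g⁻¹ * x * g ∈ X := hg x hx
  have h := hn _ hx'
  calc x * (g * n * g⁻¹) = g * ((g⁻¹ * x * g) * n) * g⁻¹ := by group
    _ = g * (n * (g⁻¹ * x * g)) * g⁻¹ := by rw [h]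
    _ = (g * n * g⁻¹) * x := by group
/-- Let `G` be a finite semisimple group (no nontrivial abelian normal
subgroups), `S ≤ G` a nonabelian simple subgroup and `N` the normal closure of
`S` in `G`. Then `S` is an internal direct factor of `Soc(G)` iff
`N ≅ S^k` for some `k ≥ 1` and `S` is normal in `N`. -/
theorem simple_subgroup_direct_factor_of_socle_iff
    {G : Type*} [Group G] [Finite G]
    (hsemisimple : ∀ A : Subgroup G, A.Normal → (∀ x ∈ A, ∀ y ∈ A, x * y = y * x) → A = ⊥)
    (S : Subgroup G) [IsSimpleGroup S] (hnonab : ∃ x y : S, x * y ≠ y * x)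
    (N : Subgroup G) (hN : N = Subgroup.normalClosure (S : Set G)) :
    (∃ T : Subgroup G,
        S ≤ Subgroup.socle G ∧ T ≤ Subgroup.socle G ∧
        (∀ g ∈ Subgroup.socle G, ∀ s ∈ S, g * s * g⁻¹ ∈ S) ∧
        (∀ g ∈ Subgroup.socle G, ∀ t ∈ T, g * t * g⁻¹ ∈ T) ∧
        S ⊓ T = ⊥ ∧ S ⊔ T = Subgroup.socle G) ↔
      ((∃ k : ℕ, 1 ≤ k ∧ Nonempty ((N : Subgroup G) ≃* (Fin k → S))) ∧
        S ≤ N ∧ ∀ g ∈ N, ∀ s ∈ S, g * s * g⁻¹ ∈ S) := by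
  classical
  have hSocNorm : (Subgroup.socle G).Normal := socle_normal G
  -- center-triviality : S ⊓ centralizer S = ⊥ as elements
  have hScent : ∀ x : G, x ∈ S → x ∈ Subgroup.centralizer (S : Set G) → x = 1 := by
    intro x hxS hxc
    have hc : (⟨x, hxS⟩ : S) ∈ Subgroup.center S := by
      rw [Subgroup.mem_center_iff]
      intro g
      ext
      exact Subgroup.mem_centralizer_iff.mp hxc (g : G) g.2
    rw [center_eq_bot_of_noncomm hnonab, Subgroup.mem_bot] at hc
    exact congrArg Subtype.val hc
  constructor
  · rintro ⟨T, hSle, hTle, hSnorm, hTnorm, hST, hSTsup⟩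
    set c : G → Subgroup G := fun g => S.map (MulAut.conj g).toMonoidHom with hcdef
    have hc_memmap : ∀ g x, x ∈ c g ↔ ∃ s ∈ S, g * s * g⁻¹ = x := by
      intro g x
      simp [hcdef, Subgroup.mem_map, MulAut.conj_apply]
    have hcS : c 1 = S := by
      ext x
      rw [hc_memmap]
      constructor
      · rintro ⟨s, hs, rfl⟩; simpa using hs
      · intro hx; exact ⟨x, hx, by group⟩
    have hcle : ∀ g, c g ≤ Subgroup.socle G := by
      intro g x hx
      obtain ⟨s, hs, rfl⟩ := (hc_memmap g x).mp hx
      exact hSocNorm.conj_mem s (hSle hs) g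
    have hcnorm : ∀ g, ∀ x ∈ Subgroup.socle G, ∀ p ∈ c g, x * p * x⁻¹ ∈ c g := by
      intro g x hx p hp
      obtain ⟨s, hs, rfl⟩ := (hc_memmap g p).mp hp
      have hxin : g⁻¹ * x * g ∈ Subgroup.socle G := by
        simpa [mul_assoc] using hSocNorm.conj_mem x hx g⁻¹
      have hs' : (g⁻¹ * x * g) * s * (g⁻¹ * x * g)⁻¹ ∈ S := hSnorm _ hxin s hs
      refine (hc_memmap g _).mpr ⟨_, hs', ?_⟩
      group
    have hequiv : ∀ g : G, Nonempty ((S : Subgroup G) ≃* ↥(c g)) := fun g =>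
      ⟨Subgroup.equivMapOfInjective S _ (MulAut.conj g).injective⟩
    have hnontriv : ∀ g : G, Nontrivial ↥(c g) := by
      intro g
      obtain ⟨e⟩ := hequiv g
      exact e.symm.toEquiv.nontrivial
    have hsimple : ∀ g : G, IsSimpleGroup ↥(c g) := by
      intro g
      obtain ⟨e⟩ := hequiv g
      haveI := hnontriv g
      exact IsSimpleGroup.isSimpleGroup_of_surjective e.toMonoidHom e.surjective
    have hsub : ∀ g' h' : G, ((c h').subgroupOf (c g')).Normal := by
      intro g' h'
      constructor
      rintro ⟨x, hxg⟩ hx ⟨p', hp'⟩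
      rw [Subgroup.mem_subgroupOf] at hx ⊢
      exact hcnorm h' p' (hcle g' hp') x hx
    have hpair : ∀ g h : G, c g ≠ c h → ∀ p ∈ c g, ∀ q ∈ c h, p * q = q * p := by
      intro g h hne p hp q hq
      haveI := hsimple g
      haveI := hsimple h
      rcases (hsub g h).eq_bot_or_eq_top with hb | ht
      · set z := p * q * p⁻¹ * q⁻¹ with hz
        have hz1 : z ∈ c g := by
          have h1 : q * p⁻¹ * q⁻¹ ∈ c g := hcnorm g q (hcle h hq) p⁻¹ (inv_mem hp)
          have heq : z = p * (q * p⁻¹ * q⁻¹) := by rw [hz]; group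
          rw [heq]; exact mul_mem hp h1
        have hz2 : z ∈ c h := by
          have h1 : p * q * p⁻¹ ∈ c h := hcnorm h p (hcle g hp) q hq
          exact mul_mem h1 (inv_mem hq)
        have hmem : (⟨z, hz1⟩ : ↥(c g)) ∈ (c h).subgroupOf (c g) := by
          rw [Subgroup.mem_subgroupOf]; exact hz2
        rw [hb, Subgroup.mem_bot] at hmem
        have hz1' : p * q * p⁻¹ * q⁻¹ = 1 := congrArg Subtype.val hmem
        have hpq : p * q * p⁻¹ = q := mul_inv_eq_one.mp hz1'
        calc p * q = (p * q * p⁻¹) * p := by group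
          _ = q * p := by rw [hpq]
      · exfalso
        have hgh : c g ≤ c h := Subgroup.subgroupOf_eq_top.mp ht
        rcases (hsub h g).eq_bot_or_eq_top with hb' | ht'
        · rw [Subgroup.subgroupOf_eq_bot] at hb'
          have hbot : c g = ⊥ := le_bot_iff.mp (hb' le_rfl hgh)
          have hne' : c g ≠ ⊥ := (Subgroup.nontrivial_iff_ne_bot (c g)).mp (hnontriv g)
          exact hne' hbot
        · exact hne (le_antisymm hgh (Subgroup.subgroupOf_eq_top.mp ht'))
    have hmapc : ∀ x g : G, (c g).map (MulAut.conj x).toMonoidHom = c (x * g) := by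
      intro x g
      ext y
      rw [hc_memmap]
      constructor
      · rintro ⟨p, hp, rfl⟩
        obtain ⟨s, hs, rfl⟩ := (hc_memmap g p).mp hp
        refine ⟨s, hs, ?_⟩
        simp only [MulEquiv.coe_toMonoidHom, MulAut.conj_apply]
        group
      · rintro ⟨s, hs, rfl⟩
        refine ⟨g * s * g⁻¹, (hc_memmap g _).mpr ⟨s, hs, rfl⟩, ?_⟩
        simp only [MulEquiv.coe_toMonoidHom, MulAut.conj_apply]
        group
    have hNsup : N = ⨆ g : G, c g := by
      rw [hN]
      have hnormal : (⨆ g : G, c g).Normal := by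
        constructor
        intro n hn x
        have hmem : (MulAut.conj x).toMonoidHom n ∈
            (⨆ g : G, c g).map (MulAut.conj x).toMonoidHom :=
          Subgroup.mem_map_of_mem _ hn
        rw [Subgroup.map_iSup] at hmem
        have hre : (⨆ g : G, (c g).map (MulAut.conj x).toMonoidHom) = ⨆ g : G, c g := by
          apply le_antisymm
          · exact iSup_le fun g => by rw [hmapc]; exact le_iSup c (x * g)
          · refine iSup_le fun g => ?_
            have hxg : x * (x⁻¹ * g) = g := by group
            have hcg : c g = (c (x⁻¹ * g)).map (MulAut.conj x).toMonoidHom := by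
              rw [hmapc, hxg]
            rw [hcg]
            exact le_iSup (fun g' => (c g').map (MulAut.conj x).toMonoidHom) (x⁻¹ * g)
        rw [hre] at hmem
        simpa [MulAut.conj_apply] using hmem
      apply le_antisymm
      · haveI := hnormal
        apply Subgroup.normalClosure_le_normal
        intro x hx
        exact (le_iSup c 1) (hcS.symm ▸ hx)
      · refine iSup_le fun g => ?_
        intro x hx
        obtain ⟨s, hs, rfl⟩ := (hc_memmap g x).mp hx
        exact Subgroup.normalClosure_normal.conj_mem s (Subgroup.subset_normalClosure hs) g
    haveI hfinsub : Finite (Subgroup G) := Finite.of_injective _ SetLike.coe_injective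
    haveI : Finite ↥(Set.range c) := (Set.finite_range c).to_subtype
    haveI : Fintype ↥(Set.range c) := Fintype.ofFinite _
    obtain ⟨k, ⟨eι⟩⟩ := Finite.exists_equiv_fin ↥(Set.range c)
    have hιne : Nonempty ↥(Set.range c) := ⟨⟨S, ⟨1, hcS⟩⟩⟩
    have hk : 1 ≤ k := Nat.one_le_iff_ne_zero.mpr (by
      intro h0
      subst h0
      exact (eι hιne.some).elim0)
    set ϕ : ∀ P : ↥(Set.range c), ↥((P : Subgroup G)) →* G :=
      fun P => (P : Subgroup G).subtype with hϕ
    have hcomm : Pairwise fun P Q : ↥(Set.range c) => ∀ x y, Commute (ϕ P x) (ϕ Q y) := by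
      intro P Q hPQ x y
      have hne : (P : Subgroup G) ≠ (Q : Subgroup G) := fun hh => hPQ (Subtype.ext hh)
      obtain ⟨g, hg⟩ := P.2
      obtain ⟨h, hh⟩ := Q.2
      have hx : (x : G) ∈ c g := by rw [hg]; exact x.2
      have hy : (y : G) ∈ c h := by rw [hh]; exact y.2
      rw [commute_iff_eq]
      exact hpair g h (by rw [hg, hh]; exact hne) x hx y hy
    have hPcentbot : ∀ P : Subgroup G, P ∈ Set.range c →
        ∀ x ∈ P, x ∈ Subgroup.centralizer (P : Set G) → x = 1 := by
      rintro P ⟨g, rfl⟩ x hxP hxc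
      obtain ⟨e⟩ := hequiv g
      have hz : ∀ u : ↥S, u * e.symm ⟨x, hxP⟩ = e.symm ⟨x, hxP⟩ * u := by
        intro u
        apply e.injective
        rw [map_mul, map_mul, MulEquiv.apply_symm_apply]
        ext
        simp only [Subgroup.coe_mul]
        exact Subgroup.mem_centralizer_iff.mp hxc _ (e u).2
      have hcent : e.symm ⟨x, hxP⟩ ∈ Subgroup.center ↥S := Subgroup.mem_center_iff.mpr hz
      rw [center_eq_bot_of_noncomm hnonab, Subgroup.mem_bot] at hcent
      have h1 : (⟨x, hxP⟩ : ↥(c g)) = 1 := by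
        have h2 := congrArg e hcent
        rw [MulEquiv.apply_symm_apply] at h2
        simpa using h2
      exact congrArg Subtype.val h1
    have hind : iSupIndep (fun P : ↥(Set.range c) => ((P : Subgroup G))) := by
      intro P
      rw [disjoint_iff_inf_le]
      intro x hx
      have hx1 : x ∈ (P : Subgroup G) := (Subgroup.mem_inf.mp hx).1
      have hx2 : x ∈ ⨆ (Q : ↥(Set.range c)) (_ : Q ≠ P), (Q : Subgroup G) :=
        (Subgroup.mem_inf.mp hx).2
      have hcent : (⨆ (Q : ↥(Set.range c)) (_ : Q ≠ P), (Q : Subgroup G)) ≤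
          Subgroup.centralizer ((P : Subgroup G) : Set G) := by
        refine iSup_le fun Q => iSup_le fun hQP => ?_
        intro y hy
        rw [Subgroup.mem_centralizer_iff]
        intro z hz
        obtain ⟨g, hg⟩ := P.2
        obtain ⟨h, hh⟩ := Q.2
        have hne : c g ≠ c h := by
          rw [hg, hh]
          exact fun hh' => hQP (Subtype.ext hh'.symm)
        exact hpair g h hne z (by rw [hg]; exact hz) y (by rw [hh]; exact hy)
      rw [Subgroup.mem_bot]
      exact hPcentbot P P.2 x hx1 (hcent hx2)
    set f := MonoidHom.noncommPiCoprod ϕ hcomm with hf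
    have hrangeϕ : (fun P : ↥(Set.range c) => (ϕ P).range) =
        fun P : ↥(Set.range c) => (P : Subgroup G) :=
      funext fun P => Subgroup.range_subtype _
    have hrange : f.range = N := by
      rw [hf, MonoidHom.noncommPiCoprod_range, hrangeϕ, hNsup]
      apply le_antisymm
      · refine iSup_le fun P => ?_
        obtain ⟨g, hg⟩ := P.2
        rw [← hg]
        exact le_iSup c g
      · refine iSup_le fun g => ?_
        exact le_iSup (fun P : ↥(Set.range c) => (P : Subgroup G)) ⟨c g, g, rfl⟩
    have hinj : Function.Injective f :=
      MonoidHom.injective_noncommPiCoprod_of_iSupIndep ϕ (hrangeϕ ▸ hind)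
        (fun P => Subtype.coe_injective)
    have hPe : ∀ P : ↥(Set.range c), Nonempty (↥(P : Subgroup G) ≃* ↥S) := by
      intro P
      obtain ⟨g, hg⟩ := P.2
      rw [← hg]
      exact ⟨(hequiv g).some.symm⟩
    have e1 : (∀ P : ↥(Set.range c), ↥((P : Subgroup G))) ≃* ↥(f.range) :=
      MonoidHom.ofInjective hinj
    have e2 : ↥(f.range) ≃* ↥N := MulEquiv.subgroupCongr hrange
    have e3 : (∀ P : ↥(Set.range c), ↥((P : Subgroup G))) ≃*
        (∀ _ : ↥(Set.range c), ↥S) :=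
      MulEquiv.piCongrRight fun P => (hPe P).some
    have e4 : (∀ _ : ↥(Set.range c), ↥S) ≃* (Fin k → ↥S) :=
      { toEquiv := Equiv.piCongrLeft' (fun _ => ↥S) eι
        map_mul' := fun x y => rfl }
    have final : ↥N ≃* (Fin k → ↥S) :=
      ((e2.symm.trans e1.symm).trans e3).trans e4
    have hnorm : N ≤ Subgroup.normalizer (S : Set G) := by
      rw [hNsup]
      refine iSup_le fun g => ?_
      by_cases hcg : c g = S
      · rw [hcg]; exact Subgroup.le_normalizer
      · intro x hx
        rw [Subgroup.mem_normalizer_iff]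
        intro s
        have hcomm' : ∀ s' ∈ S, x * s' = s' * x := by
          intro s' hs'
          exact hpair g 1 (by rw [hcS]; exact hcg) x hx s' (by rw [hcS]; exact hs')
        constructor
        · intro hs
          have heq : x * s * x⁻¹ = s := by
            rw [hcomm' s hs, mul_assoc, mul_inv_cancel, mul_one]
          rw [heq]; exact hs
        · intro hs
          have hc2 := hcomm' _ hs
          have h3 : x⁻¹ * (x * s * x⁻¹) * x = x * s * x⁻¹ := by
            calc x⁻¹ * (x * s * x⁻¹) * x = x⁻¹ * ((x * s * x⁻¹) * x) := by group
              _ = x⁻¹ * (x * (x * s * x⁻¹)) := by rw [hc2]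
              _ = x * s * x⁻¹ := by group
          have h4 : s = x⁻¹ * (x * s * x⁻¹) * x := by group
          rw [h4, h3]; exact hs
    refine ⟨⟨k, hk, ⟨final⟩⟩, ?_, ?_⟩
    · rw [hN]; exact Subgroup.le_normalClosure
    · intro g hg s hs
      exact (Subgroup.mem_normalizer_iff.mp (hnorm hg) s).mp hs
  · rintro ⟨⟨k, hk, ⟨e⟩⟩, hSN, hSnormN⟩
    have hNnormal : N.Normal := by rw [hN]; infer_instance
    -- generic application of the sup-centralizer lemma inside N
    have happ : ∀ X : Subgroup G, X ≤ N → (X.subgroupOf N).Normal →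
        X ⊔ (((Subgroup.centralizer ((X.subgroupOf N : Subgroup N) : Set N)).map N.subtype))
          = N := by
      intro X hXN hXnorm
      have h := sup_centralizer_eq_top_of_equiv hnonab e (X.subgroupOf N) hXnorm
      have h2 := congrArg (Subgroup.map N.subtype) h
      rw [Subgroup.map_sup, Subgroup.subgroupOf_map_subtype, inf_eq_left.mpr hXN] at h2
      rw [h2, ← MonoidHom.range_eq_map, Subgroup.range_subtype]
    have hCle : ∀ X : Subgroup G, X ≤ N →
        ((Subgroup.centralizer ((X.subgroupOf N : Subgroup N) : Set N)).map N.subtype) ≤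
          N ⊓ Subgroup.centralizer (X : Set G) := by
      rintro X hXN x ⟨⟨n, hnN⟩, hcen, rfl⟩
      refine ⟨hnN, Subgroup.mem_centralizer_iff.mpr fun h hh => ?_⟩
      have hmem : (⟨h, hXN hh⟩ : N) ∈ X.subgroupOf N := by
        rw [Subgroup.mem_subgroupOf]; exact hh
      have := Subgroup.mem_centralizer_iff.mp hcen _ hmem
      exact congrArg Subtype.val this
    -- Step 1 : N ≤ socle
    haveI : (Subgroup.socle G).Normal := hSocNorm
    haveI : N.Normal := hNnormal
    have hXnorm : (Subgroup.socle G ⊓ N).Normal := Subgroup.normal_inf_normal _ _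
    have hD : N ⊓ Subgroup.centralizer ((Subgroup.socle G ⊓ N : Subgroup G) : Set G) = ⊥ := by
      by_contra hne
      have hDnorm : (N ⊓ Subgroup.centralizer
          ((Subgroup.socle G ⊓ N : Subgroup G) : Set G)).Normal := by
        constructor
        rintro n ⟨hnN, hnc⟩ g
        refine ⟨hNnormal.conj_mem n hnN g, conj_mem_centralizer_of ?_ hnc⟩
        intro x hx
        simpa [mul_assoc] using hXnorm.conj_mem x hx g⁻¹
      obtain ⟨M, hM, hMle⟩ := exists_minimal_normal_le _ hDnorm hne
      have hMsoc : M ≤ Subgroup.socle G := le_sSup hM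
      have hMN : M ≤ N := hMle.trans inf_le_left
      have hMab : ∀ x ∈ M, ∀ y ∈ M, x * y = y * x := by
        intro x hx y hy
        have hxc := (hMle hx).2
        exact (Subgroup.mem_centralizer_iff.mp hxc y ⟨hMsoc hy, hMN hy⟩).symm
      exact hM.2.1 (hsemisimple M hM.1 hMab)
    have hNsoc : N ≤ Subgroup.socle G := by
      have h1 := happ (Subgroup.socle G ⊓ N) inf_le_right (hXnorm.subgroupOf N)
      have hC := (hCle (Subgroup.socle G ⊓ N) inf_le_right).trans_eq hD
      rw [le_bot_iff] at hC
      rw [hC, sup_bot_eq] at h1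
      rw [← h1]; exact inf_le_left
    -- Step 2 : decomposition of N over S
    have hSsub : (S.subgroupOf N).Normal := by
      rw [Subgroup.normal_subgroupOf_iff hSN]
      intro h k hh hk
      exact hSnormN k hk h hh
    have h2 := happ S hSN hSsub
    set T : Subgroup G := Subgroup.socle G ⊓ Subgroup.centralizer (S : Set G) with hTdef
    have hCS : ((Subgroup.centralizer ((S.subgroupOf N : Subgroup N) : Set N)).map N.subtype)
        ≤ T := by
      refine (hCle S hSN).trans ?_
      exact inf_le_inf_right _ hNsoc
    have hNleST : N ≤ S ⊔ T := by
      rw [← h2]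
      exact sup_le_sup_left hCS S
    -- each minimal normal subgroup normalizes S and lies in S ⊔ T
    have hmin : ∀ M : Subgroup G, M.IsMinimalNormal →
        M ≤ Subgroup.normalizer (S : Set G) ∧ M ≤ S ⊔ T := by
      intro M hM
      haveI := hM.1
      have hMinf : (M ⊓ N).Normal := Subgroup.normal_inf_normal _ _
      rcases hM.2.2 (M ⊓ N) hMinf inf_le_left with hb | he
      · -- disjoint case : M centralizes N (hence S)
        have hdisj : Disjoint M N := by
          rw [disjoint_iff]; exact hb
        have hcomm : ∀ m ∈ M, ∀ n ∈ N, m * n = n * m := fun m hm n hn =>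
          Subgroup.commute_of_normal_of_disjoint M N hM.1 hNnormal hdisj m n hm hn
        constructor
        · intro m hm
          rw [Subgroup.mem_normalizer_iff]
          intro s
          constructor
          · intro hs
            have : m * s = s * m := hcomm m hm s (hSN hs)
            rw [this, mul_assoc, mul_inv_cancel, mul_one]; exact hs
          · intro hs
            have heq : m * s * m⁻¹ = s := by
              have hc := hcomm m hm _ (hSN hs)
              calc m * s * m⁻¹ = m⁻¹ * (m * (m * s * m⁻¹)) := by group
                _ = m⁻¹ * ((m * s * m⁻¹) * m) := by rw [hc]
                _ = s := by group
            exact heq ▸ hs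
        · refine le_trans ?_ le_sup_right
          refine le_inf (le_sSup hM) ?_
          intro m hm
          rw [Subgroup.mem_centralizer_iff]
          intro s hs
          exact (hcomm m hm s (hSN hs)).symm
      · -- contained case : M ≤ N
        have hMN : M ≤ N := by
          conv_lhs => rw [← he]
          exact inf_le_right
        constructor
        · intro m hm
          rw [Subgroup.mem_normalizer_iff]
          intro s
          constructor
          · intro hs; exact hSnormN m (hMN hm) s hs
          · intro hs
            have h3 := hSnormN m⁻¹ (inv_mem (hMN hm)) _ hs
            simpa [mul_assoc] using h3
        · exact hMN.trans hNleST
    refine ⟨T, hSN.trans hNsoc, inf_le_left, ?_, ?_, ?_, ?_⟩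
    · intro g hg s hs
      have hgn : g ∈ Subgroup.normalizer (S : Set G) := by
        have : Subgroup.socle G ≤ Subgroup.normalizer (S : Set G) := sSup_le fun M hM => (hmin M hM).1
        exact this hg
      exact (Subgroup.mem_normalizer_iff.mp hgn s).mp hs
    · intro g hg t ht
      have hgn : g ∈ Subgroup.normalizer (S : Set G) := by
        have : Subgroup.socle G ≤ Subgroup.normalizer (S : Set G) := sSup_le fun M hM => (hmin M hM).1
        exact this hg
      have ht1 : t ∈ Subgroup.socle G := (Subgroup.mem_inf.mp ht).1
      have ht2 : t ∈ Subgroup.centralizer (S : Set G) := (Subgroup.mem_inf.mp ht).2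
      refine Subgroup.mem_inf.mpr ⟨mul_mem (mul_mem hg ht1) (inv_mem hg), ?_⟩
      exact conj_mem_centralizer_of
        (fun x hx => by
          have := (Subgroup.mem_normalizer_iff.mp (inv_mem hgn) x).mp hx
          simpa [mul_assoc] using this) ht2
    · rw [eq_bot_iff]
      intro x hx
      rw [Subgroup.mem_bot]
      have hx1 : x ∈ S := (Subgroup.mem_inf.mp hx).1
      have hx2 := (Subgroup.mem_inf.mp (Subgroup.mem_inf.mp hx).2).2
      exact hScent x hx1 hx2
    · refine le_antisymm (sup_le (hSN.trans hNsoc) inf_le_left) ?_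
      exact sSup_le fun M hM => (hmin M hM).2
end

section
/- Let G and H be groups, R a normal subgroup of G with trivial centralizer C_G(R) = 1, and S a normal subgroup of H with trivial centralizer C_H(S) = 1. Let α : G → Aut(R) and β : H → Aut(S) be the (injective) homomorphisms given by the conjugation actions of G on R and of H on S, with images G* = α(G) and H* = β(H). Let f : R → S be a group isomorphism. Then f extends to a group isomorphism G → H if and only if conjugation by f carries G* onto H*, i.e., { f ∘ σ ∘ f⁻¹ : σ ∈ G* } = H*. -/
/-- Let `R ⊴ G` and `S ⊴ H` be normal subgroups with trivial centralizers,
let `α : G →* Aut(R)` and `β : H →* Aut(S)` be the conjugation representations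
with images `G* = α(G)`, `H* = β(H)`, and let `f : R ≃* S` be an isomorphism.
Then `f` extends to an isomorphism `G ≃* H` iff conjugation by `f` carries
`G*` onto `H*`. -/
theorem extends_iff_permutational_isomorphism
    {G H : Type*} [Group G] [Group H]
    (R : Subgroup G) [R.Normal] (hRcent : Subgroup.centralizer (R : Set G) = ⊥)
    (S : Subgroup H) [S.Normal] (hScent : Subgroup.centralizer (S : Set H) = ⊥)
    (f : R ≃* S) :
    (∃ φ : G ≃* H, ∀ r : R, φ (r : G) = (f r : H)) ↔
      (fun σ : MulAut R => (f.symm.trans σ).trans f) ''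
          ((MulAut.conjNormal : G →* MulAut R).range : Set (MulAut R)) =
        ((MulAut.conjNormal : H →* MulAut S).range : Set (MulAut S)) := by
  set α := (MulAut.conjNormal : G →* MulAut R) with hαdef
  set β := (MulAut.conjNormal : H →* MulAut S) with hβdef
  -- conjugation by `f` as an isomorphism of automorphism groups
  let c : MulAut R ≃* MulAut S :=
    { toFun := fun σ => (f.symm.trans σ).trans f
      invFun := fun τ => (f.trans τ).trans f.symm
      left_inv := by intro σ; ext r; simp
      right_inv := by intro τ; ext s; simp
      map_mul' := by intro σ τ; ext s; simp }
  have hα : Function.Injective α := by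
    rw [← MonoidHom.ker_eq_bot_iff, eq_bot_iff, ← hRcent]
    intro g hg
    rw [Subgroup.mem_centralizer_iff]
    intro r hr
    have h1 := congrArg Subtype.val (MulEquiv.ext_iff.mp hg ⟨r, hr⟩)
    simp only [hαdef, MulAut.conjNormal_apply, MulAut.one_apply] at h1
    rw [mul_inv_eq_iff_eq_mul] at h1
    exact h1.symm
  have hβ : Function.Injective β := by
    rw [← MonoidHom.ker_eq_bot_iff, eq_bot_iff, ← hScent]
    intro h hh
    rw [Subgroup.mem_centralizer_iff]
    intro s hs
    have h1 := congrArg Subtype.val (MulEquiv.ext_iff.mp hh ⟨s, hs⟩)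
    simp only [hβdef, MulAut.conjNormal_apply, MulAut.one_apply] at h1
    rw [mul_inv_eq_iff_eq_mul] at h1
    exact h1.symm
  constructor
  · rintro ⟨φ, hφ⟩
    have key : ∀ g : G, c (α g) = β (φ g) := by
      intro g
      ext s
      show ((f ((α g) (f.symm s))) : H) = ((β (φ g)) s : H)
      rw [← hφ]
      simp only [hαdef, hβdef, MulAut.conjNormal_apply, map_mul, map_inv]
      rw [hφ]
      simp
    ext τ
    constructor
    · rintro ⟨σ, hσ, rfl⟩
      obtain ⟨g, rfl⟩ := hσ
      exact ⟨φ g, (key g).symm⟩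
    · rintro ⟨h, rfl⟩
      refine ⟨α (φ.symm h), ⟨φ.symm h, rfl⟩, ?_⟩
      show c (α (φ.symm h)) = β h
      rw [key (φ.symm h)]
      simp
  · intro hset
    have hmap : α.range.map (c : MulAut R →* MulAut S) = β.range :=
      SetLike.ext' (by rw [Subgroup.coe_map]; exact hset)
    let φ : G ≃* H :=
      (MonoidHom.ofInjective hα).trans ((c.subgroupMap α.range).trans
        ((MulEquiv.subgroupCongr hmap).trans (MonoidHom.ofInjective hβ).symm))
    have hβφ : ∀ g : G, β (φ g) = c (α g) := by
      intro g
      show β ((MonoidHom.ofInjective hβ).symm _) = _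
      rw [MonoidHom.apply_ofInjective_symm hβ]
      rfl
    refine ⟨φ, fun r => hβ ?_⟩
    rw [hβφ]
    ext s
    show ((f ((α (r : G)) (f.symm s))) : H) = ((β ((f r : S) : H)) s : H)
    have h1 : (α (r : G)) (f.symm s) = r * f.symm s * r⁻¹ := by
      apply Subtype.ext
      simp [hαdef]
    rw [h1]
    simp [hβdef]
end

section
/- Let G be a group, N a normal subgroup of G, and S a subgroup of N that is normal in N and is a simple group. Then for every g ∈ G, the conjugate gSg⁻¹ is contained in N and is normal in N, and if gSg⁻¹ ≠ S then S and gSg⁻¹ commute elementwise: for all x ∈ S and all y ∈ gSg⁻¹, xy = yx. -/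
/-- If `N ⊴ G`, and `S ≤ N` is a simple subgroup that is normal in `N`, then
every conjugate `gSg⁻¹` is contained in `N` and normal in `N`, and any
conjugate distinct from `S` commutes with `S` elementwise. -/
theorem conjugates_of_simple_normal_in_normal
    {G : Type*} [Group G] (N S : Subgroup G) [N.Normal]
    (hSN : S ≤ N) (hSnorm : ∀ n ∈ N, ∀ s ∈ S, n * s * n⁻¹ ∈ S)
    [IsSimpleGroup S] (g : G) :
    Subgroup.map (MulAut.conj g).toMonoidHom S ≤ N ∧
    (∀ n ∈ N, ∀ s ∈ Subgroup.map (MulAut.conj g).toMonoidHom S,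
      n * s * n⁻¹ ∈ Subgroup.map (MulAut.conj g).toMonoidHom S) ∧
    (Subgroup.map (MulAut.conj g).toMonoidHom S ≠ S →
      ∀ x ∈ S, ∀ y ∈ Subgroup.map (MulAut.conj g).toMonoidHom S, x * y = y * x) := by
  set T := Subgroup.map (MulAut.conj g).toMonoidHom S with hT
  have hmem : ∀ y, y ∈ T ↔ ∃ s ∈ S, g * s * g⁻¹ = y := by
    intro y
    simp [hT, Subgroup.mem_map, MulAut.conj_apply]
  -- T ≤ N
  have hTN : T ≤ N := by
    intro y hy
    obtain ⟨s, hs, rfl⟩ := (hmem y).1 hy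
    exact Subgroup.Normal.conj_mem ‹N.Normal› s (hSN hs) g
  -- T normal in N
  have hTnorm : ∀ n ∈ N, ∀ s ∈ T, n * s * n⁻¹ ∈ T := by
    intro n hn y hy
    obtain ⟨s, hs, rfl⟩ := (hmem y).1 hy
    have hn' : g⁻¹ * n * g ∈ N := by
      have := Subgroup.Normal.conj_mem ‹N.Normal› n hn g⁻¹
      simpa using this
    have hconj : (g⁻¹ * n * g) * s * (g⁻¹ * n * g)⁻¹ ∈ S := hSnorm _ hn' s hs
    refine (hmem _).2 ⟨_, hconj, ?_⟩
    group
  refine ⟨hTN, hTnorm, ?_⟩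
  intro hne x hx y hy
  -- T is simple (isomorphic image of S)
  have e : S ≃* T := MulEquiv.subgroupMap (MulAut.conj g) S
  have : Nontrivial T := e.symm.toEquiv.nontrivial
  have hTsimple : IsSimpleGroup T :=
    IsSimpleGroup.isSimpleGroup_of_surjective e.toMonoidHom e.surjective
  -- S ⊓ T is normal in S as a subgroup of S
  have hSTnorm : ((S ⊓ T).subgroupOf S).Normal := by
    refine ⟨fun t ht s => ?_⟩
    rw [Subgroup.mem_subgroupOf] at ht ⊢
    obtain ⟨ht1, ht2⟩ := ht
    exact ⟨S.mul_mem (S.mul_mem s.2 ht1) (S.inv_mem s.2),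
      hTnorm s (hSN s.2) t ht2⟩
  rcases hSTnorm.eq_bot_or_eq_top with hbot | htop
  · -- S ⊓ T = ⊥ : commutator argument
    have hST : S ⊓ T ≤ ⊥ := by
      intro z hz
      have : (⟨z, hz.1⟩ : S) ∈ (S ⊓ T).subgroupOf S := by
        rw [Subgroup.mem_subgroupOf]; exact hz
      rw [hbot, Subgroup.mem_bot] at this
      simpa [Subgroup.mem_bot] using congrArg Subtype.val this
    -- [x, y] ∈ S ⊓ T
    have hc1 : x * y * x⁻¹ * y⁻¹ ∈ T :=
      T.mul_mem (hTnorm x (hSN hx) y hy) (T.inv_mem hy)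
    have hc2 : x * y * x⁻¹ * y⁻¹ ∈ S := by
      have : x * (y * x⁻¹ * y⁻¹) ∈ S :=
        S.mul_mem hx (hSnorm y (hTN hy) x⁻¹ (S.inv_mem hx))
      simpa [mul_assoc] using this
    have := hST ⟨hc2, hc1⟩
    rw [Subgroup.mem_bot] at this
    have h1 : x * y * x⁻¹ = y := by
      have := congrArg (· * y) this
      simpa [mul_assoc] using this
    calc x * y = (x * y * x⁻¹) * x := by group
      _ = y * x := by rw [h1]
  · -- S ⊓ T = ⊤ : S ≤ T, derive contradiction with hne
    exfalso
    have hSleT : S ≤ T := by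
      intro s hs
      have : (⟨s, hs⟩ : S) ∈ (S ⊓ T).subgroupOf S := htop ▸ Subgroup.mem_top _
      rw [Subgroup.mem_subgroupOf] at this
      exact this.2
    -- S is normal in T
    have hSTnorm' : (S.subgroupOf T).Normal := by
      refine ⟨fun s hs t => ?_⟩
      rw [Subgroup.mem_subgroupOf] at hs ⊢
      exact hSnorm t (hTN t.2) s hs
    rcases hSTnorm'.eq_bot_or_eq_top with hb | htt
    · -- S = ⊥, contradicting nontriviality of S
      have : S = ⊥ := by
        rw [eq_bot_iff]
        intro s hs
        have : (⟨s, hSleT hs⟩ : T) ∈ S.subgroupOf T := by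
          rw [Subgroup.mem_subgroupOf]; exact hs
        rw [hb, Subgroup.mem_bot] at this
        simpa [Subgroup.mem_bot] using congrArg Subtype.val this
      obtain ⟨a, b, hab⟩ := (inferInstance : Nontrivial S)
      apply hab
      ext
      have ha := a.2; have hb' := b.2
      simp only [this, Subgroup.mem_bot] at ha hb'
      rw [ha, hb']
    · -- S = T, contradicting hne
      apply hne
      apply le_antisymm _ hSleT
      intro t ht
      have : (⟨t, ht⟩ : T) ∈ S.subgroupOf T := htt ▸ Subgroup.mem_top _
      rw [Subgroup.mem_subgroupOf] at this
      exact this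
end
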